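/- Let V = ⊕_{i∈I} V_i and W = ⊕_{i∈I} W_i be I-graded vector spaces, let x : V → V be a graded linear map of degree +1 and x̄ : V → V a graded linear map of degree −1 with x ∘ x̄ = x̄ ∘ x, and let t : V → W be a graded linear map of degree 0. Assume stability: the only I-graded subspace S ⊆ V with x(S) ⊆ S, x̄(S) ⊆ S and t(S) = 0 is S = 0. Set N := ker x. Then N is an I-graded subspace with x̄(N) ⊆ N; let x', x̄' be the graded maps induced on V/N and let t' : V/N → W be the degree +1 graded map induced by t ∘ x (well-defined since (t ∘ x)(N) = 0). Then x' ∘ x̄' = x̄' ∘ x', and the only I-graded subspace S' ⊆ V/N with x'(S') ⊆ S', x̄'(S') ⊆ S' and t'(S') = 0 is S' = 0. -/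

import Mathlib

/-!
Let `N = ker x`. Because `x` is homogeneous and the grading is a direct sum, `N` is graded, and
since `x̄` commutes with `x` it preserves `N`; so everything descends to `V ⧸ N`. Given a graded
subspace `S'` of `V ⧸ N` killed by `t'` and stable under `x'` and `x̄'`, its preimage `S` in `V`
is graded and stable under `x` and `x̄`, and `T = x(S)` is graded, stable under `x` and `x̄`
(they commute) and killed by `t`, because `t(x(S)) = t'(S')`. Stability of `(x, x̄, t)` forces
`T = 0`, i.e. `S ⊆ N`, i.e. `S' = 0`.
-/

open LinearMap

namespace Submodule

variable {R M M' ι ι' : Type*} [Ring R] [AddCommGroup M] [Module R M] [AddCommGroup M']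
  [Module R M']

def IsGraded (p : ι → Submodule R M) (S : Submodule R M) : Prop :=
  S = ⨆ i, S ⊓ p i

theorem isGraded_of_le {p : ι → Submodule R M} {S : Submodule R M}
    (h : S ≤ ⨆ i, S ⊓ p i) : IsGraded p S :=
  le_antisymm h (iSup_le fun _ => inf_le_left)

theorem IsGraded.map {p : ι → Submodule R M} {q : ι' → Submodule R M'} {S : Submodule R M}
    (hS : IsGraded p S) {f : M →ₗ[R] M'} (e : ι → ι') (hf : ∀ i, (p i).map f ≤ q (e i)) :
    IsGraded q (S.map f) := by
  refine isGraded_of_le ?_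
  calc S.map f = (⨆ i, S ⊓ p i).map f := congrArg _ hS
    _ = ⨆ i, (S ⊓ p i).map f := map_iSup _ _
    _ ≤ ⨆ j, S.map f ⊓ q j := iSup_le fun i => le_iSup_of_le (e i) <|
      le_inf (map_mono inf_le_left) ((map_mono inf_le_right).trans (hf i))

/-- The homogeneous components of `f v` are the images of those of `v`, so they all vanish
when `f v` does. -/
theorem isGraded_ker {p : ι → Submodule R M} {q : ι' → Submodule R M'} (hp : iSup p = ⊤)
    (hq : iSupIndep q) {e : ι → ι'} (he : Function.Injective e) {f : M →ₗ[R] M'}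
    (hf : ∀ i, (p i).map f ≤ q (e i)) : IsGraded p (ker f) := by
  refine isGraded_of_le fun v hv => ?_
  obtain ⟨c, hcp, rfl⟩ := (mem_iSup_iff_exists_finsupp p v).mp (hp ▸ mem_top)
  rw [Finsupp.sum, mem_ker, map_sum] at hv
  have hfc : ∀ i ∈ c.support, f (c i) = 0 :=
    (iSupIndep_iff_finsetSum_eq_zero_imp_eq_zero _).mp (hq.comp he) c.support
      (fun i => f (c i)) (fun i _ => hf i (mem_map_of_mem (hcp i))) hv
  exact sum_mem fun i hi => mem_iSup_of_mem i ⟨mem_ker.mpr (hfc i hi), hcp i⟩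

theorem IsGraded.comap_mkQ {p : ι → Submodule R M} {N : Submodule R M} (hN : IsGraded p N)
    {S' : Submodule R (M ⧸ N)} (hS' : IsGraded (fun i => (p i).map N.mkQ) S') :
    IsGraded p (S'.comap N.mkQ) := by
  set S := S'.comap N.mkQ
  have hNS : N ≤ S := ker_mkQ N ▸ ker_le_comap _
  have hS'S : S' ≤ (⨆ i, S ⊓ p i).map N.mkQ := by
    refine hS'.le.trans (iSup_le fun i => ?_)
    rintro _ ⟨hv', v, hv, rfl⟩
    exact mem_map_of_mem (mem_iSup_of_mem i ⟨hv', hv⟩)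
  refine isGraded_of_le ?_
  calc S ≤ ((⨆ i, S ⊓ p i).map N.mkQ).comap N.mkQ := comap_mono hS'S
    _ = N ⊔ ⨆ i, S ⊓ p i := comap_map_mkQ _ _
    _ ≤ ⨆ i, S ⊓ p i := sup_le (hN.le.trans (iSup_mono fun _ => inf_le_inf_right _ hNS)) le_rfl

theorem map_comap_mkQ_le_of_map_mapQ_le {N : Submodule R M} {f : M →ₗ[R] M}
    (hf : N ≤ N.comap f) {S' : Submodule R (M ⧸ N)} (h : S'.map (N.mapQ N f hf) ≤ S') :
    (S'.comap N.mkQ).map f ≤ S'.comap N.mkQ := by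
  rintro _ ⟨v, hv, rfl⟩
  exact h ⟨N.mkQ v, hv, rfl⟩

theorem map_map_le_map_of_comp_eq {f g : M →ₗ[R] M} (hfg : f ∘ₗ g = g ∘ₗ f)
    {S : Submodule R M} (hS : S.map g ≤ S) : (S.map f).map g ≤ S.map f := by
  rw [← map_comp, ← hfg, map_comp]
  exact map_mono hS

end Submodule

theorem LinearMap.map_ker_le_ker_of_comp_eq {R M : Type*} [Ring R] [AddCommGroup M]
    [Module R M] {f g : M →ₗ[R] M} (hfg : f ∘ₗ g = g ∘ₗ f) : (ker f).map g ≤ ker f := by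
  rintro _ ⟨v, hv, rfl⟩
  rw [mem_ker, ← comp_apply, hfg, comp_apply, mem_ker.mp hv, map_zero]

open Submodule

section Stability

variable {R M M' ι : Type*} [Ring R] [AddCommGroup M] [Module R M] [AddCommGroup M']
  [Module R M']

def IsStable (p : ι → Submodule R M) (x y : M →ₗ[R] M) (t : M →ₗ[R] M') : Prop :=
  ∀ S : Submodule R M, IsGraded p S → S.map x ≤ S → S.map y ≤ S → S.map t = ⊥ → S = ⊥

theorem IsStable.quotient_ker {p : ι → Submodule R M} {x y : M →ₗ[R] M} {t : M →ₗ[R] M'}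
    (hstab : IsStable p x y t) (e : ι → ι) (hx : ∀ i, (p i).map x ≤ p (e i))
    (hcomm : x ∘ₗ y = y ∘ₗ x) (hker : IsGraded p (ker x))
    (hxN : ker x ≤ (ker x).comap x) (hyN : ker x ≤ (ker x).comap y) :
    IsStable (fun i => (p i).map (ker x).mkQ) ((ker x).mapQ _ x hxN) ((ker x).mapQ _ y hyN)
      ((ker x).liftQ (t ∘ₗ x) (ker_le_ker_comp x t)) := by
  intro S' hS' hxS' hyS' htS'
  set S := S'.comap (ker x).mkQ
  have hxS : S.map x ≤ S := map_comap_mkQ_le_of_map_mapQ_le hxN hxS'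
  have hyS : S.map y ≤ S := map_comap_mkQ_le_of_map_mapQ_le hyN hyS'
  have hS'S : S.map (ker x).mkQ = S' := map_comap_eq_of_surjective (mkQ_surjective _) S'
  have htxS : (S.map x).map t = ⊥ := by
    rw [← map_comp, ← liftQ_mkQ (ker x) (t ∘ₗ x) (ker_le_ker_comp x t), map_comp, hS'S, htS']
  have hxS_bot : S.map x = ⊥ :=
    hstab _ ((hker.comap_mkQ hS').map e hx) (map_mono hxS)
      (map_map_le_map_of_comp_eq hcomm hyS) htxS
  rw [← hS'S, ← le_bot_iff, ← mkQ_map_self (ker x)]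
  exact map_mono (le_ker_iff_map.mpr hxS_bot)

end Stability

theorem stmt7_general (n : ℕ)
    (V W : Type*) [AddCommGroup V] [Module ℂ V] [AddCommGroup W] [Module ℂ W]
    (Vgr : ZMod (n + 1) → Submodule ℂ V)
    (hV : DirectSum.IsInternal Vgr)
    (x xbar : V →ₗ[ℂ] V) (t : V →ₗ[ℂ] W)
    (hx : ∀ i, (Vgr i).map x ≤ Vgr (i + 1))
    (hcomm : x ∘ₗ xbar = xbar ∘ₗ x)
    (hstab : ∀ S : Submodule ℂ V, (S = ⨆ i, S ⊓ Vgr i) →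
      S.map x ≤ S → S.map xbar ≤ S → S.map t = ⊥ → S = ⊥)
    (N : Submodule ℂ V) (hN : N = LinearMap.ker x) :
    (N = ⨆ i, N ⊓ Vgr i) ∧
    N.map xbar ≤ N ∧
    (N.map (t ∘ₗ x) = ⊥) ∧
    ∃ (x' xbar' : (V ⧸ N) →ₗ[ℂ] (V ⧸ N)) (t' : (V ⧸ N) →ₗ[ℂ] W),
      (∀ v : V, x' (N.mkQ v) = N.mkQ (x v)) ∧
      (∀ v : V, xbar' (N.mkQ v) = N.mkQ (xbar v)) ∧
      (∀ v : V, t' (N.mkQ v) = t (x v)) ∧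
      x' ∘ₗ xbar' = xbar' ∘ₗ x' ∧
      (∀ S' : Submodule ℂ (V ⧸ N), (S' = ⨆ i, S' ⊓ (Vgr i).map N.mkQ) →
        S'.map x' ≤ S' → S'.map xbar' ≤ S' → S'.map t' = ⊥ → S' = ⊥) := by
  subst hN
  have hker : IsGraded Vgr (ker x) :=
    isGraded_ker hV.submodule_iSup_eq_top hV.submodule_iSupIndep (add_left_injective 1) hx
  have hxN : ker x ≤ (ker x).comap x := map_le_iff_le_comap.mp (map_ker_le_ker_of_comp_eq rfl)
  have hyN : ker x ≤ (ker x).comap xbar := map_le_iff_le_comap.mp (map_ker_le_ker_of_comp_eq hcomm)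
  refine ⟨hker, map_le_iff_le_comap.mpr hyN, le_ker_iff_map.mp (ker_le_ker_comp x t),
    (ker x).mapQ _ x hxN, (ker x).mapQ _ xbar hyN, (ker x).liftQ (t ∘ₗ x) (ker_le_ker_comp x t),
    fun _ => rfl, fun _ => rfl, fun _ => rfl, ?_,
    IsStable.quotient_ker hstab _ hx hcomm hker hxN hyN⟩
  rw [← mapQ_comp, ← mapQ_comp]
  congr 1

/-- Stability descent in the proof of Theorem 5.4(1): stability of `(x + x̄, t)` passes
to the induced point on `V / ker x` with framing map induced by `t ∘ x`. -/
theorem stmt7 (n : ℕ) (hn : 1 ≤ n)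
    (V W : Type*) [AddCommGroup V] [Module ℂ V] [AddCommGroup W] [Module ℂ W]
    [FiniteDimensional ℂ V] [FiniteDimensional ℂ W]
    (Vgr : ZMod (n + 1) → Submodule ℂ V) (Wgr : ZMod (n + 1) → Submodule ℂ W)
    (hV : DirectSum.IsInternal Vgr) (hW : DirectSum.IsInternal Wgr)
    (x xbar : V →ₗ[ℂ] V) (t : V →ₗ[ℂ] W)
    (hx : ∀ i, (Vgr i).map x ≤ Vgr (i + 1))
    (hxbar : ∀ i, (Vgr i).map xbar ≤ Vgr (i - 1))
    (ht : ∀ i, (Vgr i).map t ≤ Wgr i)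
    (hcomm : x ∘ₗ xbar = xbar ∘ₗ x)
    (hstab : ∀ S : Submodule ℂ V, (S = ⨆ i, S ⊓ Vgr i) →
      S.map x ≤ S → S.map xbar ≤ S → S.map t = ⊥ → S = ⊥)
    (N : Submodule ℂ V) (hN : N = LinearMap.ker x) :
    (N = ⨆ i, N ⊓ Vgr i) ∧
    N.map xbar ≤ N ∧
    (N.map (t ∘ₗ x) = ⊥) ∧
    ∃ (x' xbar' : (V ⧸ N) →ₗ[ℂ] (V ⧸ N)) (t' : (V ⧸ N) →ₗ[ℂ] W),
      (∀ v : V, x' (N.mkQ v) = N.mkQ (x v)) ∧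
      (∀ v : V, xbar' (N.mkQ v) = N.mkQ (xbar v)) ∧
      (∀ v : V, t' (N.mkQ v) = t (x v)) ∧
      x' ∘ₗ xbar' = xbar' ∘ₗ x' ∧
      (∀ S' : Submodule ℂ (V ⧸ N), (S' = ⨆ i, S' ⊓ (Vgr i).map N.mkQ) →
        S'.map x' ≤ S' → S'.map xbar' ≤ S' → S'.map t' = ⊥ → S' = ⊥) :=
  stmt7_general n V W Vgr hV x xbar t hx hcomm hstab N hN
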